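/- Let q ∈ [2,∞) be real, 0 ≤ ρ ≤ 1, and set λ := ln( μ*·(1+ρ·(1/μ*−1))^q + (1−μ*)·(1−ρ)^q ) / ((q−1)·ln(1/μ*)). Then for every nonnegative function f : Ω^n → ℝ it holds that ‖T_ρ f‖_q ≤ ∏_{S⊆{1,…,n}} ‖E(f|S)‖_q^{λ^{|S|}·(1−λ)^{n−|S|}} (with the convention 0^0 = 1 in the exponents). -/

import Mathlib

open Finset

/-- Expectation of `f : Ω^n → ℝ` under the product measure `μ^{⊗n}`. -/
noncomputable def pExpct {Ω : Type*} [Fintype Ω] (μ : Ω → ℝ) {n : ℕ}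
    (f : (Fin n → Ω) → ℝ) : ℝ :=
  ∑ x : Fin n → Ω, (∏ i, μ (x i)) * f x

/-- Conditional expectation on the coordinates in `S`:
`E(f|S)(x) = E_{y∼μ^{⊗n}} f(z)` where `z_i = x_i` for `i ∈ S` and `z_i = y_i` otherwise. -/
noncomputable def condExp {Ω : Type*} [Fintype Ω] (μ : Ω → ℝ) {n : ℕ}
    (S : Finset (Fin n)) (f : (Fin n → Ω) → ℝ) : (Fin n → Ω) → ℝ :=
  fun x => pExpct μ (fun y => f (S.piecewise x y))

/-- The noise operator on all `n` coordinates: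
`T_ρ f = Σ_S ρ^{|S|} (1-ρ)^{n-|S|} E(f|S)`. -/
noncomputable def noiseOpN {Ω : Type*} [Fintype Ω] (μ : Ω → ℝ) {n : ℕ}
    (ρ : ℝ) (f : (Fin n → Ω) → ℝ) : (Fin n → Ω) → ℝ :=
  fun x => ∑ S : Finset (Fin n), ρ ^ S.card * (1 - ρ) ^ (n - S.card) * condExp μ S f x

/-- The `q`-norm with respect to the product measure. -/
noncomputable def pqNorm {Ω : Type*} [Fintype Ω] (μ : Ω → ℝ) {n : ℕ}
    (q : ℝ) (f : (Fin n → Ω) → ℝ) : ℝ :=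
  (∑ x : Fin n → Ω, (∏ i, μ (x i)) * |f x| ^ q) ^ (1 / q)

/-!
Write `φ(t) = (ρ t + 1 - ρ)^q`, `T = 1/μ*` and `Q(t) = φ(t) - φ(0) + t φ(0)`, so that `Q(T)/T`
is the number whose logarithm defines `λ`. On one coordinate, take `g ≥ 0` with `E g = 1` (hence
`g ≤ T`) and put `u = (E g^q)^(1/(q-1)) ∈ [1, T]`. The curve `φ(0) + B t + C t^q` through
`(0, φ(0))` and tangent to `φ` at `u` lies above `φ` on `[0, ∞)` (their difference is concave,
then convex), which gives `E φ(g) ≤ Q(u)/u`. Two applications of the monotone l'Hôpital rule show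
that `log (Q(x)/x) / log x` increases on `(1, ∞)`, so `Q(u)/u ≤ u^((q-1) λ) = (E g^q)^λ`.
By homogeneity, `‖ρ g + (1-ρ) E g‖_q ≤ ‖E g‖_q^(1-λ) ‖g‖_q^λ`; applied fibrewise on `Ω^n` and
combined with Hölder's inequality this bounds the noise on one coordinate, and induction over the
coordinates gives the product formula.
-/

open Real

namespace NoiseStability

section Calculus

open Set

variable {f f' g g' : ℝ → ℝ}

lemma monotoneOn_of_hasDerivAt_nonneg {D : Set ℝ} (hD : Convex ℝ D)
    (hf : ∀ x ∈ D, HasDerivAt f (f' x) x) (hf' : ∀ x ∈ interior D, 0 ≤ f' x) :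
    MonotoneOn f D :=
  monotoneOn_of_hasDerivWithinAt_nonneg hD
    (fun x hx => (hf x hx).continuousAt.continuousWithinAt)
    (fun x hx => (hf x (interior_subset hx)).hasDerivWithinAt) hf'

lemma antitoneOn_of_hasDerivAt_nonpos {D : Set ℝ} (hD : Convex ℝ D)
    (hf : ∀ x ∈ D, HasDerivAt f (f' x) x) (hf' : ∀ x ∈ interior D, f' x ≤ 0) :
    AntitoneOn f D :=
  antitoneOn_of_hasDerivWithinAt_nonpos hD
    (fun x hx => (hf x hx).continuousAt.continuousWithinAt)
    (fun x hx => (hf x (interior_subset hx)).hasDerivWithinAt) hf'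

/-- The monotone form of l'Hôpital's rule. -/
lemma monotoneOn_div_of_monotoneOn_deriv_div {a : ℝ}
    (hf : ∀ x ∈ Ici a, HasDerivAt f (f' x) x) (hg : ∀ x ∈ Ici a, HasDerivAt g (g' x) x)
    (hfa : f a = 0) (hga : g a = 0) (hg' : ∀ x ∈ Ioi a, 0 < g' x)
    (hmono : MonotoneOn (fun x => f' x / g' x) (Ioi a)) :
    MonotoneOn (fun x => f x / g x) (Ioi a) := by
  have hcont : ∀ {h h' : ℝ → ℝ}, (∀ x ∈ Ici a, HasDerivAt h (h' x) x) →
      ∀ x, ContinuousOn h (Icc a x) :=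
    fun hh x y hy => (hh y hy.1).continuousAt.continuousWithinAt
  have hg_pos : ∀ x ∈ Ioi a, 0 < g x := by
    intro x hx
    obtain ⟨c, hc, hslope⟩ := exists_hasDerivAt_eq_slope g g' hx (hcont hg x)
      (fun c hc => hg c (le_of_lt hc.1))
    have := hg' c hc.1
    rw [hslope, hga, sub_zero] at this
    exact (div_pos_iff_of_pos_right (sub_pos.2 hx)).1 this
  have hcross : ∀ x ∈ Ioi a, f x * g' x ≤ f' x * g x := by
    intro x hx
    obtain ⟨c, hc, hcauchy⟩ := exists_ratio_hasDerivAt_eq_ratio_slope f f' hx (hcont hf x)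
      (fun c hc => hf c (le_of_lt hc.1)) g g' (hcont hg x) (fun c hc => hg c (le_of_lt hc.1))
    rw [hfa, hga, sub_zero, sub_zero] at hcauchy
    have hle := hmono hc.1 hx hc.2.le
    rw [div_le_div_iff₀ (hg' c hc.1) (hg' x hx)] at hle
    have := mul_le_mul_of_nonneg_left hle (hg_pos x hx).le
    refine le_of_mul_le_mul_left ?_ (hg' c hc.1)
    calc g' c * (f x * g' x) = (f x * g' c) * g' x := by ring
      _ = g x * (f' c * g' x) := by rw [← hcauchy]; ring
      _ ≤ g x * (f' x * g' c) := this
      _ = g' c * (f' x * g x) := by ring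
  refine monotoneOn_of_hasDerivAt_nonneg (convex_Ioi a)
    (fun x hx => (hf x (mem_Ioi.1 hx).le).div (hg x (mem_Ioi.1 hx).le) (hg_pos x hx).ne') ?_
  rw [interior_Ioi]
  exact fun x hx => div_nonneg (sub_nonneg.2 (hcross x hx)) (sq_nonneg _)

lemma exists_threshold_of_monotoneOn {m : ℝ → ℝ} {a b : ℝ} (hab : a ≤ b)
    (hm : MonotoneOn m (Ici a)) (hcont : ContinuousOn m (Icc a b)) (hb : 0 ≤ m b) :
    ∃ t₀ ∈ Icc a b, (∀ t ∈ Ico a t₀, m t ≤ 0) ∧ ∀ t ∈ Ici t₀, 0 ≤ m t := by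
  by_cases ha : 0 ≤ m a
  · exact ⟨a, left_mem_Icc.2 hab, fun t ht => absurd ht.2 (not_lt.2 ht.1),
      fun t ht => ha.trans (hm self_mem_Ici ht ht)⟩
  obtain ⟨t₀, ht₀, hzero⟩ := intermediate_value_Icc hab hcont ⟨(not_le.1 ha).le, hb⟩
  refine ⟨t₀, ht₀, fun t ht => ?_, fun t ht => ?_⟩
  · exact hzero ▸ hm ht.1 ht₀.1 ht.2.le
  · exact hzero ▸ hm ht₀.1 (ht₀.1.trans ht) ht

lemma nonneg_of_antitoneOn_monotoneOn_deriv {ψ ψ' : ℝ → ℝ} {a t₀ u : ℝ} (ht₀ : t₀ ∈ Icc a u)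
    (hψ : ∀ t ∈ Ici a, HasDerivAt ψ (ψ' t) t)
    (hanti : AntitoneOn ψ' (Icc a t₀)) (hmono : MonotoneOn ψ' (Ici t₀))
    (hψa : ψ a = 0) (hψu : ψ u = 0) (hψ'u : ψ' u = 0) {t : ℝ} (ht : a ≤ t) : 0 ≤ ψ t := by
  have hright : ∀ t ∈ Ici t₀, 0 ≤ ψ t := by
    intro t ht
    rcases le_total t u with htu | hut
    · have : AntitoneOn ψ (Icc t₀ u) := by
        refine antitoneOn_of_hasDerivAt_nonpos (convex_Icc t₀ u)
          (fun s hs => hψ s (ht₀.1.trans hs.1)) fun s hs => ?_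
        rw [interior_Icc] at hs
        exact hψ'u ▸ hmono (mem_Ici.2 hs.1.le) (mem_Ici.2 ht₀.2) hs.2.le
      exact hψu ▸ this ⟨ht, htu⟩ (right_mem_Icc.2 ht₀.2) htu
    · have : MonotoneOn ψ (Ici u) := by
        refine monotoneOn_of_hasDerivAt_nonneg (convex_Ici u)
          (fun s hs => hψ s (ht₀.1.trans (ht₀.2.trans hs))) fun s hs => ?_
        rw [interior_Ici] at hs
        exact hψ'u ▸ hmono (mem_Ici.2 ht₀.2) (mem_Ici.2 (ht₀.2.trans hs.le)) hs.le
      exact hψu ▸ this self_mem_Ici hut hut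
  rcases le_total t₀ t with h | h
  · exact hright t h
  have hconcave : ConcaveOn ℝ (Icc a t₀) ψ := by
    have hderiv : EqOn ψ' (deriv ψ) (interior (Icc a t₀)) := fun s hs =>
      ((hψ s (interior_subset hs).1).deriv).symm
    refine AntitoneOn.concaveOn_of_deriv (convex_Icc a t₀)
      (fun s hs => (hψ s hs.1).continuousAt.continuousWithinAt)
      (fun s hs => (hψ s (interior_subset hs).1).differentiableAt.differentiableWithinAt)
      ((hanti.mono interior_subset).congr hderiv)
  have := hconcave.min_le_of_mem_Icc (left_mem_Icc.2 ht₀.1) (right_mem_Icc.2 ht₀.1) ⟨ht, h⟩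
  rw [hψa] at this
  exact le_trans (le_min le_rfl (hright t₀ self_mem_Ici)) this

lemma rpow_le_rpow_sub_one_mul {x T q : ℝ} (hx : 0 ≤ x) (hxT : x ≤ T) (hq : 1 ≤ q) :
    x ^ q ≤ T ^ (q - 1) * x := by
  calc x ^ q = x ^ (q - 1) * x ^ (1 : ℝ) := by
        rw [← rpow_add' hx (by linarith)]; ring_nf
    _ ≤ T ^ (q - 1) * x := by
        rw [rpow_one]
        exact mul_le_mul_of_nonneg_right (rpow_le_rpow hx hxT (by linarith)) hx

end Calculus

noncomputable def phi (q ρ t : ℝ) : ℝ := (ρ * t + (1 - ρ)) ^ q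

noncomputable def phiDeriv (q ρ t : ℝ) : ℝ := q * ρ * (ρ * t + (1 - ρ)) ^ (q - 1)

noncomputable def phiDeriv2 (q ρ t : ℝ) : ℝ := q * (q - 1) * ρ ^ 2 * (ρ * t + (1 - ρ)) ^ (q - 2)

noncomputable def tangentGap (q ρ t : ℝ) : ℝ := t * phiDeriv q ρ t - phi q ρ t + phi q ρ 0

/-- `twoPoint q ρ t / t` is `E φ(g)` for the `g` of mean `1` taking the values `t` and `0` with
probabilities `1/t` and `1 - 1/t`. -/
noncomputable def twoPoint (q ρ t : ℝ) : ℝ := phi q ρ t - phi q ρ 0 + t * phi q ρ 0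

section OneVariable

open Set

variable {q ρ : ℝ}

lemma affine_pos (hρ0 : 0 ≤ ρ) (hρ1 : ρ < 1) {t : ℝ} (ht : 0 ≤ t) : 0 < ρ * t + (1 - ρ) := by
  nlinarith

lemma affine_nonneg (hρ0 : 0 ≤ ρ) (hρ1 : ρ ≤ 1) {t : ℝ} (ht : 0 ≤ t) :
    0 ≤ ρ * t + (1 - ρ) := by
  nlinarith

lemma phi_zero : phi q ρ 0 = (1 - ρ) ^ q := by simp [phi]

lemma phi_one : phi q ρ 1 = 1 := by simp [phi]

lemma hasDerivAt_affine (t : ℝ) : HasDerivAt (fun s => ρ * s + (1 - ρ)) ρ t := by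
  simpa using ((hasDerivAt_id' t).const_mul ρ).add_const (1 - ρ)

lemma hasDerivAt_phi (hq : 1 ≤ q) (t : ℝ) : HasDerivAt (phi q ρ) (phiDeriv q ρ t) t :=
  ((hasDerivAt_affine t).rpow_const (Or.inr hq)).congr_deriv (by simp only [phiDeriv]; ring)

lemma hasDerivAt_phiDeriv (hq : 2 ≤ q) (t : ℝ) :
    HasDerivAt (phiDeriv q ρ) (phiDeriv2 q ρ t) t := by
  have := ((hasDerivAt_affine (ρ := ρ) t).rpow_const (p := q - 1)
    (Or.inr (by linarith))).const_mul (q * ρ)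
  refine this.congr_deriv ?_
  simp only [phiDeriv2, show q - 1 - 1 = q - 2 by ring]
  ring

lemma hasDerivAt_tangentGap (hq : 2 ≤ q) (t : ℝ) :
    HasDerivAt (tangentGap q ρ) (t * phiDeriv2 q ρ t) t := by
  have := (((hasDerivAt_id' t).mul (hasDerivAt_phiDeriv (ρ := ρ) hq t)).sub
    (hasDerivAt_phi (ρ := ρ) (by linarith) t)).add_const (phi q ρ 0)
  exact this.congr_deriv (by ring)

lemma hasDerivAt_twoPoint (hq : 1 ≤ q) (t : ℝ) :
    HasDerivAt (twoPoint q ρ) (phiDeriv q ρ t + phi q ρ 0) t := by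
  have := ((hasDerivAt_phi (ρ := ρ) hq t).sub_const (phi q ρ 0)).add
    ((hasDerivAt_id' t).mul_const (phi q ρ 0))
  exact this.congr_deriv (by ring)

lemma phi_zero_pos (hρ1 : ρ < 1) : 0 < phi q ρ 0 := by
  rw [phi_zero]; exact rpow_pos_of_pos (by linarith) q

lemma phi_zero_le_phi (hq : 0 ≤ q) (hρ0 : 0 ≤ ρ) (hρ1 : ρ ≤ 1) {t : ℝ} (ht : 0 ≤ t) :
    phi q ρ 0 ≤ phi q ρ t := by
  rw [phi_zero]
  exact rpow_le_rpow (by linarith) (by nlinarith) hq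

lemma phiDeriv_nonneg (hq : 0 ≤ q) (hρ0 : 0 ≤ ρ) (hρ1 : ρ ≤ 1) {t : ℝ} (ht : 0 ≤ t) :
    0 ≤ phiDeriv q ρ t :=
  mul_nonneg (mul_nonneg hq hρ0) (rpow_nonneg (affine_nonneg hρ0 hρ1 ht) _)

lemma phiDeriv2_nonneg (hq : 1 ≤ q) (hρ0 : 0 ≤ ρ) (hρ1 : ρ ≤ 1) {t : ℝ} (ht : 0 ≤ t) :
    0 ≤ phiDeriv2 q ρ t := by
  have := rpow_nonneg (affine_nonneg hρ0 hρ1 ht) (q - 2)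
  have : 0 ≤ q - 1 := by linarith
  unfold phiDeriv2
  positivity

lemma tangentGap_zero : tangentGap q ρ 0 = 0 := by simp [tangentGap]

lemma twoPoint_zero : twoPoint q ρ 0 = 0 := by simp [twoPoint]

lemma twoPoint_one : twoPoint q ρ 1 = 1 := by simp [twoPoint, phi_one]

lemma twoPoint_pos (hq : 0 ≤ q) (hρ0 : 0 ≤ ρ) (hρ1 : ρ < 1) {t : ℝ} (ht : 0 < t) :
    0 < twoPoint q ρ t := by
  have := phi_zero_le_phi hq hρ0 hρ1.le ht.le
  have := mul_pos ht (phi_zero_pos (q := q) hρ1)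
  unfold twoPoint
  linarith

lemma mul_twoPoint_deriv (t : ℝ) :
    t * (phiDeriv q ρ t + phi q ρ 0) = tangentGap q ρ t + twoPoint q ρ t := by
  simp only [tangentGap, twoPoint]
  ring

lemma tangentGap_nonneg (hq : 2 ≤ q) (hρ0 : 0 ≤ ρ) (hρ1 : ρ ≤ 1) {t : ℝ} (ht : 0 ≤ t) :
    0 ≤ tangentGap q ρ t := by
  have : MonotoneOn (tangentGap q ρ) (Ici 0) :=
    monotoneOn_of_hasDerivAt_nonneg (convex_Ici 0) (fun s _ => hasDerivAt_tangentGap hq s)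
      fun s hs => by
        rw [interior_Ici] at hs
        exact mul_nonneg hs.le (phiDeriv2_nonneg (by linarith) hρ0 hρ1 hs.le)
  simpa [tangentGap_zero] using this self_mem_Ici ht ht

lemma mul_phiDeriv2_div_eq (hρ0 : 0 < ρ) (hρ1 : ρ < 1) {t : ℝ} (ht : 0 < t) :
    t * phiDeriv2 q ρ t / (phiDeriv q ρ t + phi q ρ 0) = q * (q - 1) * ρ ^ 2 /
      (q * ρ * (ρ + (1 - ρ) / t) + phi q ρ 0 / (t * (ρ * t + (1 - ρ)) ^ (q - 2))) := by
  have hz := affine_pos hρ0.le hρ1 ht.le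
  have hsplit : (ρ * t + (1 - ρ)) ^ (q - 1) = (ρ * t + (1 - ρ)) ^ (q - 2) * (ρ * t + (1 - ρ)) := by
    rw [← rpow_add_one hz.ne']; ring_nf
  simp only [phiDeriv2, phiDeriv, hsplit]
  have hw := rpow_pos_of_pos hz (q - 2)
  generalize (ρ * t + (1 - ρ)) ^ (q - 2) = w at hw ⊢
  field_simp

/-- The denominator in `mul_phiDeriv2_div_eq` is antitone in `t`, being `q ρ z / t` plus
`φ(0) / (t z^(q-2))` with `z = ρ t + 1 - ρ`. -/
lemma monotoneOn_mul_phiDeriv2_div (hq : 2 ≤ q) (hρ0 : 0 < ρ) (hρ1 : ρ < 1) :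
    MonotoneOn (fun t => t * phiDeriv2 q ρ t / (phiDeriv q ρ t + phi q ρ 0)) (Ioi 0) := by
  intro s (hs : 0 < s) t (ht : 0 < t) hst
  simp only [mul_phiDeriv2_div_eq hρ0 hρ1 hs, mul_phiDeriv2_div_eq hρ0 hρ1 ht]
  have hφ0 := phi_zero_pos (q := q) hρ1
  have hzs := affine_pos hρ0.le hρ1 hs.le
  have hpow : (ρ * s + (1 - ρ)) ^ (q - 2) ≤ (ρ * t + (1 - ρ)) ^ (q - 2) :=
    rpow_le_rpow hzs.le (by nlinarith) (by linarith)
  have h1 : (1 - ρ) / t ≤ (1 - ρ) / s := div_le_div_of_nonneg_left (by linarith) hs hst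
  have h2 : phi q ρ 0 / (t * (ρ * t + (1 - ρ)) ^ (q - 2))
      ≤ phi q ρ 0 / (s * (ρ * s + (1 - ρ)) ^ (q - 2)) :=
    div_le_div_of_nonneg_left hφ0.le (mul_pos hs (rpow_pos_of_pos hzs _))
      (mul_le_mul hst hpow (rpow_pos_of_pos hzs _).le ht.le)
  have hqρ : 0 < q * ρ := mul_pos (by linarith) hρ0
  have hq1 : 0 ≤ q - 1 := by linarith
  have := rpow_pos_of_pos (affine_pos hρ0.le hρ1 ht.le) (q - 2)
  have : 0 < 1 - ρ := by linarith
  refine div_le_div_of_nonneg_left (by positivity) (by positivity) ?_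
  nlinarith

lemma monotoneOn_tangentGap_div_twoPoint (hq : 2 ≤ q) (hρ0 : 0 < ρ) (hρ1 : ρ < 1) :
    MonotoneOn (fun t => tangentGap q ρ t / twoPoint q ρ t) (Ioi 0) :=
  monotoneOn_div_of_monotoneOn_deriv_div (fun t _ => hasDerivAt_tangentGap hq t)
    (fun t _ => hasDerivAt_twoPoint (by linarith) t) tangentGap_zero twoPoint_zero
    (fun t ht => add_pos_of_nonneg_of_pos
      (phiDeriv_nonneg (by linarith) hρ0.le hρ1.le (mem_Ioi.1 ht).le) (phi_zero_pos hρ1))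
    (monotoneOn_mul_phiDeriv2_div hq hρ0 hρ1)

/-- With `Q = twoPoint q ρ`, l'Hôpital's rule shows that `log (Q(x)/x) / log x` increases on
`(1, ∞)`: the ratio of the derivatives is `x Q'(x)/Q(x) - 1 = tangentGap q ρ x / Q(x)`. -/
lemma twoPoint_div_le_rpow (hq : 2 ≤ q) (hρ0 : 0 < ρ) (hρ1 : ρ < 1) {x T : ℝ} (hT : 1 < T)
    (hx : 1 ≤ x) (hxT : x ≤ T) :
    twoPoint q ρ x / x ≤ x ^ (log (twoPoint q ρ T / T) / log T) := by
  rcases hx.eq_or_lt with rfl | hx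
  · simp [twoPoint_one]
  have hQ : ∀ y : ℝ, 0 < y → 0 < twoPoint q ρ y := fun y hy =>
    twoPoint_pos (by linarith) hρ0.le hρ1 hy
  have hmono : MonotoneOn (fun y => (log (twoPoint q ρ y) - log y) / log y) (Ioi 1) := by
    refine monotoneOn_div_of_monotoneOn_deriv_div
      (f' := fun y => (phiDeriv q ρ y + phi q ρ 0) / twoPoint q ρ y - y⁻¹) (g' := fun y => y⁻¹)
      (fun y (hy : 1 ≤ y) => ((hasDerivAt_twoPoint (by linarith) y).log
        (hQ y (by linarith)).ne').sub (hasDerivAt_log (by linarith : (0 : ℝ) < y).ne'))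
      (fun y (hy : 1 ≤ y) => hasDerivAt_log (by linarith : (0 : ℝ) < y).ne')
      (by simp [twoPoint_one]) log_one (fun y (hy : 1 < y) => inv_pos.2 (by linarith)) ?_
    refine ((monotoneOn_tangentGap_div_twoPoint hq hρ0 hρ1).mono
      (Ioi_subset_Ioi zero_le_one)).congr fun y (hy : 1 < y) => ?_
    have := mul_twoPoint_deriv (q := q) (ρ := ρ) y
    have := (hQ y (by linarith)).ne'
    field_simp
    linarith
  have hle := hmono hx (hx.trans_le hxT) hxT
  simp only at hle
  have hQx := hQ x (by linarith)
  rw [div_le_div_iff₀ (log_pos hx) (log_pos hT), ← log_div hQx.ne' (by positivity),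
    ← log_div (hQ T (by linarith)).ne' (by positivity)] at hle
  rw [← log_le_log_iff (div_pos hQx (by linarith)) (rpow_pos_of_pos (by linarith) _),
    log_rpow (by linarith), div_mul_eq_mul_div, le_div_iff₀ (log_pos hT)]
  linarith

end OneVariable

noncomputable def majorantCoeff (q ρ u : ℝ) : ℝ := tangentGap q ρ u / ((q - 1) * u ^ q)

noncomputable def majorantSlope (q ρ u : ℝ) : ℝ :=
  (phi q ρ u - phi q ρ 0 - majorantCoeff q ρ u * u ^ q) / u

/-- The function `φ(0) + B t + C t^q` agreeing with `φ` at `0` and to first order at `u`. -/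
noncomputable def majorant (q ρ u t : ℝ) : ℝ :=
  phi q ρ 0 + majorantSlope q ρ u * t + majorantCoeff q ρ u * t ^ q

noncomputable def majorantDeriv (q ρ u t : ℝ) : ℝ :=
  majorantSlope q ρ u + majorantCoeff q ρ u * (q * t ^ (q - 1))

noncomputable def curvatureSign (q ρ u t : ℝ) : ℝ :=
  majorantCoeff q ρ u * (t / (ρ * t + (1 - ρ))) ^ (q - 2) - ρ ^ 2

section Majorant

open Set

variable {q ρ u : ℝ}

lemma majorant_zero (hq : 0 < q) : majorant q ρ u 0 = phi q ρ 0 := by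
  simp [majorant, zero_rpow hq.ne']

lemma majorant_self (hu : 0 < u) : majorant q ρ u u = phi q ρ u := by
  simp only [majorant, majorantSlope]
  field_simp
  ring

lemma hasDerivAt_majorant (hq : 1 ≤ q) (t : ℝ) :
    HasDerivAt (majorant q ρ u) (majorantDeriv q ρ u t) t := by
  have := (((hasDerivAt_id' t).const_mul (majorantSlope q ρ u)).const_add (phi q ρ 0)).add
    ((hasDerivAt_rpow_const (p := q) (Or.inr hq)).const_mul (majorantCoeff q ρ u))
  exact this.congr_deriv (by rw [majorantDeriv, mul_one])

lemma hasDerivAt_majorantDeriv (hq : 2 ≤ q) (t : ℝ) :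
    HasDerivAt (majorantDeriv q ρ u) (majorantCoeff q ρ u * (q * ((q - 1) * t ^ (q - 2)))) t := by
  have := (((hasDerivAt_rpow_const (x := t) (p := q - 1) (Or.inr (by linarith))).const_mul
    q).const_mul (majorantCoeff q ρ u)).const_add (majorantSlope q ρ u)
  rwa [show q - 1 - 1 = q - 2 by ring] at this

lemma majorantDeriv_self (hq : 1 < q) (hu : 0 < u) :
    majorantDeriv q ρ u u = phiDeriv q ρ u := by
  have : q - 1 ≠ 0 := by linarith
  have := (rpow_pos_of_pos hu q).ne'
  simp only [majorantDeriv, majorantSlope, majorantCoeff, tangentGap, rpow_sub_one hu.ne']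
  field_simp
  ring

lemma majorantCoeff_nonneg (hq : 2 ≤ q) (hρ0 : 0 ≤ ρ) (hρ1 : ρ ≤ 1) (hu : 0 < u) :
    0 ≤ majorantCoeff q ρ u :=
  div_nonneg (tangentGap_nonneg hq hρ0 hρ1 hu.le)
    (mul_nonneg (by linarith) (rpow_pos_of_pos hu q).le)

lemma sq_mul_le_tangentGap (hq : 2 ≤ q) (hρ0 : 0 ≤ ρ) (hρ1 : ρ < 1) {t : ℝ} (ht : 0 ≤ t) :
    (q - 1) * ρ ^ 2 * (t ^ 2 * (ρ * t + (1 - ρ)) ^ (q - 2)) ≤ tangentGap q ρ t := by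
  have key : MonotoneOn
      (fun s => tangentGap q ρ s - (q - 1) * ρ ^ 2 * (s ^ 2 * (ρ * s + (1 - ρ)) ^ (q - 2)))
      (Ici 0) := by
    refine monotoneOn_of_hasDerivAt_nonneg (convex_Ici 0) (f' := fun s => s * phiDeriv2 q ρ s -
      (q - 1) * ρ ^ 2 * (2 * s * (ρ * s + (1 - ρ)) ^ (q - 2)
        + s ^ 2 * (ρ * (q - 2) * (ρ * s + (1 - ρ)) ^ (q - 2 - 1)))) (fun s hs => ?_) ?_
    · have hz := affine_pos hρ0 hρ1 hs
      have := (hasDerivAt_tangentGap (ρ := ρ) hq s).sub (((hasDerivAt_pow 2 s).mul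
        ((hasDerivAt_affine s).rpow_const (p := q - 2) (Or.inl hz.ne'))).const_mul
          ((q - 1) * ρ ^ 2))
      exact this.congr_deriv (by push_cast; ring)
    rw [interior_Ici]
    intro s (hs : 0 < s)
    have hz := affine_pos hρ0 hρ1 hs.le
    have hsplit : (ρ * s + (1 - ρ)) ^ (q - 2)
        = (ρ * s + (1 - ρ)) ^ (q - 2 - 1) * (ρ * s + (1 - ρ)) := by
      rw [← rpow_add_one hz.ne']; ring_nf
    have : 0 ≤ (ρ * s + (1 - ρ)) ^ (q - 2 - 1) := (rpow_pos_of_pos hz _).le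
    have : 0 ≤ q - 1 := by linarith
    have : 0 ≤ q - 2 := by linarith
    have : 0 ≤ 1 - ρ := by linarith
    have hexpand : s * phiDeriv2 q ρ s - (q - 1) * ρ ^ 2 * (2 * s * (ρ * s + (1 - ρ)) ^ (q - 2)
        + s ^ 2 * (ρ * (q - 2) * (ρ * s + (1 - ρ)) ^ (q - 2 - 1)))
        = (q - 1) * (q - 2) * ρ ^ 2 * (1 - ρ) * s * (ρ * s + (1 - ρ)) ^ (q - 2 - 1) := by
      simp only [phiDeriv2, hsplit]
      ring
    rw [hexpand]
    positivity
  simpa [tangentGap_zero] using key self_mem_Ici ht ht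

lemma monotoneOn_curvatureSign (hq : 2 ≤ q) (hρ0 : 0 ≤ ρ) (hρ1 : ρ < 1) (hu : 0 < u) :
    MonotoneOn (curvatureSign q ρ u) (Ici 0) := by
  intro s (hs : 0 ≤ s) t (ht : 0 ≤ t) hst
  have hzs := affine_pos hρ0 hρ1 hs
  have hzt := affine_pos hρ0 hρ1 ht
  have hratio : s / (ρ * s + (1 - ρ)) ≤ t / (ρ * t + (1 - ρ)) := by
    rw [div_le_div_iff₀ hzs hzt]; nlinarith
  have := mul_le_mul_of_nonneg_left
    (rpow_le_rpow (div_nonneg hs hzs.le) hratio (by linarith : (0 : ℝ) ≤ q - 2))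
    (majorantCoeff_nonneg hq hρ0 hρ1.le hu)
  simp only [curvatureSign]
  linarith

lemma continuousOn_curvatureSign (hq : 2 ≤ q) (hρ0 : 0 ≤ ρ) (hρ1 : ρ < 1) (u : ℝ) :
    ContinuousOn (curvatureSign q ρ u) (Ici 0) := by
  refine (continuousOn_const.mul (ContinuousOn.rpow_const ?_ fun _ _ => Or.inr (by linarith))).sub
    continuousOn_const
  exact continuousOn_id.div (by fun_prop) fun t ht => (affine_pos hρ0 hρ1 ht).ne'

lemma curvatureSign_self_nonneg (hq : 2 ≤ q) (hρ0 : 0 ≤ ρ) (hρ1 : ρ < 1) (hu : 0 < u) :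
    0 ≤ curvatureSign q ρ u u := by
  have hz := affine_pos hρ0 hρ1 hu.le
  have hP := sq_mul_le_tangentGap hq hρ0 hρ1 hu.le
  have hsplit : u ^ q = u ^ (q - 2) * u ^ 2 := by
    rw [← rpow_natCast, ← rpow_add hu]; norm_num
  have := rpow_pos_of_pos hu (q - 2)
  have := rpow_pos_of_pos hz (q - 2)
  have : 0 < q - 1 := by linarith
  simp only [curvatureSign, majorantCoeff, div_rpow hu.le hz.le, sub_nonneg]
  rw [div_mul_div_comm, le_div_iff₀ (by positivity), hsplit]
  nlinarith

lemma majorantDeriv2_sub_phiDeriv2 (hρ0 : 0 ≤ ρ) (hρ1 : ρ < 1) {t : ℝ} (ht : 0 ≤ t) :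
    majorantCoeff q ρ u * (q * ((q - 1) * t ^ (q - 2))) - phiDeriv2 q ρ t
      = q * (q - 1) * (ρ * t + (1 - ρ)) ^ (q - 2) * curvatureSign q ρ u t := by
  have := (rpow_pos_of_pos (affine_pos hρ0 hρ1 ht) (q - 2)).ne'
  simp only [curvatureSign, phiDeriv2, div_rpow ht (affine_pos hρ0 hρ1 ht).le]
  field_simp

lemma exists_inflection_majorant (hq : 2 ≤ q) (hρ0 : 0 ≤ ρ) (hρ1 : ρ < 1) (hu : 0 < u) :
    ∃ t₀ ∈ Icc 0 u, AntitoneOn (fun t => majorantDeriv q ρ u t - phiDeriv q ρ t) (Icc 0 t₀) ∧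
      MonotoneOn (fun t => majorantDeriv q ρ u t - phiDeriv q ρ t) (Ici t₀) := by
  obtain ⟨t₀, ht₀, hneg, hpos⟩ := exists_threshold_of_monotoneOn hu.le
    (monotoneOn_curvatureSign hq hρ0 hρ1 hu)
    ((continuousOn_curvatureSign hq hρ0 hρ1 u).mono Icc_subset_Ici_self)
    (curvatureSign_self_nonneg hq hρ0 hρ1 hu)
  have hderiv : ∀ t, HasDerivAt (fun t => majorantDeriv q ρ u t - phiDeriv q ρ t)
      (majorantCoeff q ρ u * (q * ((q - 1) * t ^ (q - 2))) - phiDeriv2 q ρ t) t :=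
    fun t => (hasDerivAt_majorantDeriv hq t).sub (hasDerivAt_phiDeriv hq t)
  have hweight : ∀ t, 0 ≤ t → 0 ≤ q * (q - 1) * (ρ * t + (1 - ρ)) ^ (q - 2) := fun t ht =>
    mul_nonneg (mul_nonneg (by linarith) (by linarith)) (rpow_nonneg (affine_pos hρ0 hρ1 ht).le _)
  refine ⟨t₀, ht₀, antitoneOn_of_hasDerivAt_nonpos (convex_Icc 0 t₀) (fun t _ => hderiv t) ?_,
    monotoneOn_of_hasDerivAt_nonneg (convex_Ici t₀) (fun t _ => hderiv t) ?_⟩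
  · rw [interior_Icc]
    intro t ht
    rw [majorantDeriv2_sub_phiDeriv2 hρ0 hρ1 ht.1.le]
    exact mul_nonpos_of_nonneg_of_nonpos (hweight t ht.1.le) (hneg t ⟨ht.1.le, ht.2⟩)
  · rw [interior_Ici]
    intro t (ht : t₀ < t)
    rw [majorantDeriv2_sub_phiDeriv2 hρ0 hρ1 (ht₀.1.trans ht.le)]
    exact mul_nonneg (hweight t (ht₀.1.trans ht.le)) (hpos t ht.le)

lemma phi_le_majorant (hq : 2 ≤ q) (hρ0 : 0 ≤ ρ) (hρ1 : ρ < 1) (hu : 0 < u) {t : ℝ}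
    (ht : 0 ≤ t) : phi q ρ t ≤ majorant q ρ u t := by
  obtain ⟨t₀, ht₀, hanti, hmono⟩ := exists_inflection_majorant hq hρ0 hρ1 hu
  have := nonneg_of_antitoneOn_monotoneOn_deriv (ψ := fun t => majorant q ρ u t - phi q ρ t) ht₀
    (fun t _ => (hasDerivAt_majorant (by linarith) t).sub (hasDerivAt_phi (by linarith) t))
    hanti hmono (by simp [majorant_zero (by linarith : (0 : ℝ) < q)])
    (by simp [majorant_self hu]) (by simp [majorantDeriv_self (by linarith : (1 : ℝ) < q) hu]) ht
  linarith

lemma majorant_expectation (hu : 0 < u) :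
    phi q ρ 0 + majorantSlope q ρ u + majorantCoeff q ρ u * u ^ (q - 1) = twoPoint q ρ u / u := by
  simp only [majorantSlope, twoPoint, rpow_sub_one hu.ne']
  field_simp
  ring

end Majorant

noncomputable def noiseExponent (μs q ρ : ℝ) : ℝ :=
  Real.log (μs * (1 + ρ * (1 / μs - 1)) ^ q + (1 - μs) * (1 - ρ) ^ q) /
    ((q - 1) * Real.log (1 / μs))

section NoiseExponent

variable {q ρ μs : ℝ}

lemma noiseExponent_eq (hμs : 0 < μs) :
    noiseExponent μs q ρ = log (twoPoint q ρ (1 / μs) / (1 / μs)) / log (1 / μs) / (q - 1) := by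
  have hK : twoPoint q ρ (1 / μs) / (1 / μs)
      = μs * (1 + ρ * (1 / μs - 1)) ^ q + (1 - μs) * (1 - ρ) ^ q := by
    simp only [twoPoint, phi, mul_zero, zero_add,
      show ρ * (1 / μs) + (1 - ρ) = 1 + ρ * (1 / μs - 1) by ring]
    field_simp
    ring
  rw [noiseExponent, hK, div_div, mul_comm (q - 1)]

lemma noiseExponent_zero : noiseExponent μs q 0 = 0 := by
  simp [noiseExponent]

lemma noiseExponent_one (hμs0 : 0 < μs) (hμs1 : μs < 1) (hq : 1 < q) :
    noiseExponent μs q 1 = 1 := by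
  have hT : 1 < 1 / μs := by rw [lt_div_iff₀ hμs0]; linarith
  have hK : μs * (1 + 1 * (1 / μs - 1)) ^ q + (1 - μs) * (1 - 1) ^ q = (1 / μs) ^ (q - 1) := by
    rw [sub_self, zero_rpow (by linarith), rpow_sub_one (by positivity)]
    field_simp
    ring_nf
  rw [noiseExponent, hK, log_rpow (by linarith)]
  exact div_self (mul_ne_zero (by linarith) (log_pos hT).ne')

lemma noiseExponent_mem_Icc (hq : 1 < q) (hρ0 : 0 ≤ ρ) (hρ1 : ρ ≤ 1) (hμs0 : 0 < μs)
    (hμs1 : μs < 1) : noiseExponent μs q ρ ∈ Set.Icc 0 1 := by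
  set T := 1 / μs with hTdef
  set c := 1 + ρ * (T - 1) with hc
  have hT : 1 < T := by rw [hTdef, lt_div_iff₀ hμs0]; linarith
  have hc0 : 0 ≤ c := by nlinarith
  have hcT : c ≤ T := by nlinarith
  have hmean : μs * c + (1 - μs) * (1 - ρ) = 1 := by
    rw [hc, hTdef]; field_simp; ring
  have hK1 : 1 ≤ μs * c ^ q + (1 - μs) * (1 - ρ) ^ q := by
    have := (convexOn_rpow hq.le).2 (Set.mem_Ici.2 hc0) (Set.mem_Ici.2 (by linarith : 0 ≤ 1 - ρ))
      hμs0.le (by linarith : 0 ≤ 1 - μs) (by ring)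
    simpa [smul_eq_mul, hmean] using this
  have hKT : μs * c ^ q + (1 - μs) * (1 - ρ) ^ q ≤ T ^ (q - 1) := calc
    _ ≤ μs * (T ^ (q - 1) * c) + (1 - μs) * (T ^ (q - 1) * (1 - ρ)) := by
        refine add_le_add (mul_le_mul_of_nonneg_left ?_ hμs0.le)
          (mul_le_mul_of_nonneg_left ?_ (by linarith))
        · exact rpow_le_rpow_sub_one_mul hc0 hcT hq.le
        · exact rpow_le_rpow_sub_one_mul (by linarith) (by linarith) hq.le
    _ = T ^ (q - 1) := by linear_combination T ^ (q - 1) * hmean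
  have hden : 0 < (q - 1) * log T := mul_pos (by linarith) (log_pos hT)
  refine ⟨div_nonneg (log_nonneg hK1) hden.le, (div_le_one hden).2 ?_⟩
  calc log (μs * c ^ q + (1 - μs) * (1 - ρ) ^ q) ≤ log (T ^ (q - 1)) :=
        log_le_log (by linarith) hKT
    _ = (q - 1) * log T := log_rpow (by linarith) _

end NoiseExponent

section Scalar

variable {q ρ μs : ℝ} {Ω : Type*} [Fintype Ω] {μ : Ω → ℝ}

lemma sum_phi_le_rpow (hq : 2 ≤ q) (hρ0 : 0 < ρ) (hρ1 : ρ < 1) (hμ : ∀ x, 0 ≤ μ x)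
    (hμsum : ∑ x, μ x = 1) {g : Ω → ℝ} (hg : ∀ x, 0 ≤ g x) (hEg : ∑ x, μ x * g x = 1)
    {T : ℝ} (hT : 1 < T) (hgT : ∀ x, g x ≤ T) :
    ∑ x, μ x * phi q ρ (g x) ≤
      (∑ x, μ x * g x ^ q) ^ (log (twoPoint q ρ T / T) / log T / (q - 1)) := by
  set m := ∑ x, μ x * g x ^ q with hm
  have hq1 : 0 < q - 1 := by linarith
  have hm1 : 1 ≤ m := by
    have := (convexOn_rpow (by linarith : (1 : ℝ) ≤ q)).map_sum_le (t := univ) (w := μ) (p := g)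
      (fun x _ => hμ x) hμsum (fun x _ => hg x)
    simpa [hEg] using this
  have hmT : m ≤ T ^ (q - 1) := calc
    m ≤ ∑ x, μ x * (T ^ (q - 1) * g x) := sum_le_sum fun x _ => mul_le_mul_of_nonneg_left
        (rpow_le_rpow_sub_one_mul (hg x) (hgT x) (by linarith)) (hμ x)
    _ = T ^ (q - 1) := by simp_rw [mul_left_comm (μ _)]; rw [← mul_sum, hEg, mul_one]
  have hm0 : 0 ≤ m := by linarith
  set u := m ^ (q - 1)⁻¹ with hu
  have hum : u ^ (q - 1) = m := by rw [hu, ← rpow_mul hm0, inv_mul_cancel₀ hq1.ne', rpow_one]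
  have hu1 : 1 ≤ u := one_le_rpow hm1 (inv_nonneg.2 hq1.le)
  have huT : u ≤ T := calc
    u ≤ (T ^ (q - 1)) ^ (q - 1)⁻¹ := rpow_le_rpow hm0 hmT (inv_nonneg.2 hq1.le)
    _ = T := by rw [← rpow_mul (by linarith), mul_inv_cancel₀ hq1.ne', rpow_one]
  calc ∑ x, μ x * phi q ρ (g x)
      ≤ ∑ x, μ x * majorant q ρ u (g x) := sum_le_sum fun x _ => mul_le_mul_of_nonneg_left
        (phi_le_majorant hq hρ0.le hρ1 (by linarith) (hg x)) (hμ x)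
    _ = phi q ρ 0 + majorantSlope q ρ u + majorantCoeff q ρ u * u ^ (q - 1) := by
        simp only [majorant, mul_add, sum_add_distrib, mul_left_comm (μ _), ← mul_sum, ← sum_mul,
          hμsum, hEg, ← hm, hum, one_mul, mul_one]
    _ = twoPoint q ρ u / u := majorant_expectation (by linarith)
    _ ≤ u ^ (log (twoPoint q ρ T / T) / log T) := twoPoint_div_le_rpow hq hρ0 hρ1 hT hu1 huT
    _ = m ^ (log (twoPoint q ρ T / T) / log T / (q - 1)) := by
        rw [hu, ← rpow_mul hm0]
        ring_nf

lemma sum_phi_div_le_rpow (hq : 2 ≤ q) (hρ0 : 0 < ρ) (hρ1 : ρ < 1) (hμs0 : 0 < μs)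
    (hμs1 : μs < 1) (hμs : ∀ x, μs ≤ μ x) (hμsum : ∑ x, μ x = 1) {g : Ω → ℝ} (hg : ∀ x, 0 ≤ g x)
    {a : ℝ} (ha : ∑ y, μ y * g y = a) (ha0 : 0 < a) :
    ∑ x, μ x * phi q ρ (g x / a) ≤ (∑ x, μ x * (g x / a) ^ q) ^ noiseExponent μs q ρ := by
  have hμ : ∀ x, 0 ≤ μ x := fun x => hμs0.le.trans (hμs x)
  have hT : 1 < 1 / μs := by rw [lt_div_iff₀ hμs0]; linarith
  have hEg : ∑ x, μ x * (g x / a) = 1 := by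
    simp_rw [mul_div_assoc', ← sum_div, ha, div_self ha0.ne']
  have hgT : ∀ x, g x / a ≤ 1 / μs := fun x => by
    have : μ x * g x ≤ a := ha ▸ single_le_sum (f := fun y => μ y * g y)
      (fun y _ => mul_nonneg (hμ y) (hg y)) (mem_univ x)
    rw [div_le_div_iff₀ ha0 hμs0]
    nlinarith [hμs x, hg x]
  rw [noiseExponent_eq hμs0]
  exact sum_phi_le_rpow hq hρ0 hρ1 hμ hμsum (fun x => div_nonneg (hg x) ha0.le) hEg hT hgT

lemma sum_noise_rpow_le (hq : 2 ≤ q) (hρ0 : 0 ≤ ρ) (hρ1 : ρ ≤ 1) (hμs0 : 0 < μs) (hμs1 : μs < 1)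
    (hμs : ∀ x, μs ≤ μ x) (hμsum : ∑ x, μ x = 1) {g : Ω → ℝ} (hg : ∀ x, 0 ≤ g x) :
    ∑ x, μ x * (ρ * g x + (1 - ρ) * ∑ y, μ y * g y) ^ q ≤
      ((∑ y, μ y * g y) ^ q) ^ (1 - noiseExponent μs q ρ) *
        (∑ x, μ x * g x ^ q) ^ noiseExponent μs q ρ := by
  have hμ : ∀ x, 0 ≤ μ x := fun x => hμs0.le.trans (hμs x)
  rcases hρ0.eq_or_lt with rfl | hρ0
  · simp [noiseExponent_zero, ← sum_mul, hμsum]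
  rcases hρ1.eq_or_lt with rfl | hρ1
  · simp [noiseExponent_one hμs0 hμs1 (by linarith : (1 : ℝ) < q)]
  set lam := noiseExponent μs q ρ
  obtain ⟨a, ha⟩ : ∃ a, ∑ y, μ y * g y = a := ⟨_, rfl⟩
  rw [ha]
  have hm0 : 0 ≤ ∑ x, μ x * g x ^ q :=
    sum_nonneg fun x _ => mul_nonneg (hμ x) (rpow_nonneg (hg x) q)
  rcases (ha ▸ sum_nonneg fun x _ => mul_nonneg (hμ x) (hg x) : 0 ≤ a).eq_or_lt with ha0 | ha0
  · have hg0 : ∀ x, g x = 0 := fun x => by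
      have := (sum_eq_zero_iff_of_nonneg fun y _ => mul_nonneg (hμ y) (hg y)).1 (ha.trans ha0.symm)
        x (mem_univ x)
      exact (mul_eq_zero.1 this).resolve_left (hμs0.trans_le (hμs x)).ne'
    have hLHS : ∑ x, μ x * (ρ * g x + (1 - ρ) * a) ^ q = 0 := by
      simp [hg0, ← ha0, zero_rpow (by linarith : q ≠ 0)]
    rw [hLHS]
    exact mul_nonneg (rpow_nonneg (rpow_nonneg ha0.le q) _) (rpow_nonneg hm0 _)
  have hscale : ∀ x, (ρ * g x + (1 - ρ) * a) ^ q = a ^ q * phi q ρ (g x / a) := fun x => by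
    rw [phi, ← mul_rpow ha0.le (affine_nonneg hρ0.le hρ1.le (div_nonneg (hg x) ha0.le))]
    congr 1
    field_simp
  have hmoment : ∑ x, μ x * (g x / a) ^ q = (∑ x, μ x * g x ^ q) / a ^ q := by
    simp_rw [div_rpow (hg _) ha0.le, mul_div_assoc', ← sum_div]
  have haq := rpow_pos_of_pos ha0 q
  calc ∑ x, μ x * (ρ * g x + (1 - ρ) * a) ^ q = a ^ q * ∑ x, μ x * phi q ρ (g x / a) := by
        simp_rw [hscale, mul_left_comm (μ _), ← mul_sum]
    _ ≤ a ^ q * ((∑ x, μ x * g x ^ q) / a ^ q) ^ lam := mul_le_mul_of_nonneg_left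
        (hmoment ▸ sum_phi_div_le_rpow hq hρ0 hρ1 hμs0 hμs1 hμs hμsum hg ha ha0) haq.le
    _ = (a ^ q) ^ (1 - lam) * (∑ x, μ x * g x ^ q) ^ lam := by
        rw [div_rpow hm0 haq.le, rpow_sub haq, rpow_one]
        field_simp

end Scalar

lemma sum_mul_rpow_mul_rpow_le {ι : Type*} (s : Finset ι) {w a b : ι → ℝ}
    (hw : ∀ i ∈ s, 0 ≤ w i) (ha : ∀ i ∈ s, 0 ≤ a i) (hb : ∀ i ∈ s, 0 ≤ b i) {θ : ℝ}
    (hθ0 : 0 ≤ θ) (hθ1 : θ ≤ 1) :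
    ∑ i ∈ s, w i * (a i ^ (1 - θ) * b i ^ θ) ≤
      (∑ i ∈ s, w i * a i) ^ (1 - θ) * (∑ i ∈ s, w i * b i) ^ θ := by
  rcases hθ0.eq_or_lt with rfl | hθ0
  · simp
  rcases hθ1.eq_or_lt with rfl | hθ1
  · simp
  have hwa : ∀ i ∈ s, 0 ≤ w i * a i := fun i hi => mul_nonneg (hw i hi) (ha i hi)
  have hwb : ∀ i ∈ s, 0 ≤ w i * b i := fun i hi => mul_nonneg (hw i hi) (hb i hi)
  calc ∑ i ∈ s, w i * (a i ^ (1 - θ) * b i ^ θ)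
      = ∑ i ∈ s, (w i * a i) ^ (1 - θ) * (w i * b i) ^ θ := sum_congr rfl fun i hi => by
        rw [mul_rpow (hw i hi) (ha i hi), mul_rpow (hw i hi) (hb i hi), mul_mul_mul_comm,
          ← rpow_add' (hw i hi) (by simp), sub_add_cancel, rpow_one]
    _ ≤ (∑ i ∈ s, ((w i * a i) ^ (1 - θ)) ^ (1 - θ)⁻¹) ^ (1 / (1 - θ)⁻¹) *
          (∑ i ∈ s, ((w i * b i) ^ θ) ^ θ⁻¹) ^ (1 / θ⁻¹) :=
        inner_le_Lp_mul_Lq_of_nonneg s (HolderConjugate.one_sub_inv_inv hθ0 hθ1)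
          (fun i hi => rpow_nonneg (hwa i hi) _) (fun i hi => rpow_nonneg (hwb i hi) _)
    _ = (∑ i ∈ s, w i * a i) ^ (1 - θ) * (∑ i ∈ s, w i * b i) ^ θ := by
        rw [sum_congr rfl fun i hi => rpow_rpow_inv (hwa i hi) (by linarith),
          sum_congr rfl fun i hi => rpow_rpow_inv (hwb i hi) hθ0.ne', one_div, one_div, inv_inv,
          inv_inv]

section ProductSpace

variable {Ω : Type*} [Fintype Ω] {μ : Ω → ℝ} {n : ℕ}

lemma sum_prod_eq_one (hμsum : ∑ x, μ x = 1) : ∑ x : Fin n → Ω, ∏ i, μ (x i) = 1 := by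
  rw [← Fintype.sum_pow, hμsum, one_pow]

lemma pExpct_comp_eval (hμsum : ∑ x, μ x = 1) (i : Fin n) (H : Ω → ℝ) :
    pExpct μ (fun y => H (y i)) = ∑ ω, μ ω * H ω := by
  have hsplit : ∀ y : Fin n → Ω,
      (∏ j, μ (y j)) * H (y i) = ∏ j, μ (y j) * (if j = i then H (y j) else 1) := fun y => by
    rw [prod_mul_distrib, Fintype.prod_ite_eq']
  have hfactor : ∀ j : Fin n, ∑ ω, μ ω * (if j = i then H ω else 1)
      = if j = i then ∑ ω, μ ω * H ω else 1 := fun j => by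
    split_ifs <;> simp [hμsum]
  simp only [pExpct, hsplit]
  rw [← Fintype.prod_sum (fun j ω => μ ω * (if j = i then H ω else 1))]
  simp_rw [hfactor]
  exact Fintype.prod_ite_eq' i _

/-- The involution `(x, y) ↦ (B.piecewise x y, B.piecewise y x)` of `Ω^n × Ω^n` preserves the
product weight. -/
lemma pExpct_pExpct_piecewise (hμsum : ∑ x, μ x = 1) (B : Finset (Fin n))
    (G : (Fin n → Ω) → ℝ) :
    pExpct μ (fun x => pExpct μ fun y => G (B.piecewise x y)) = pExpct μ G := by
  let σ : Equiv.Perm ((Fin n → Ω) × (Fin n → Ω)) :=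
    Function.Involutive.toPerm (fun p => (B.piecewise p.1 p.2, B.piecewise p.2 p.1)) fun p => by
      ext j <;> by_cases h : j ∈ B <;> simp [h]
  have hweight : ∀ x y : Fin n → Ω, (∏ j, μ (x j)) * ∏ j, μ (y j)
      = (∏ j, μ (B.piecewise x y j)) * ∏ j, μ (B.piecewise y x j) := fun x y => by
    rw [← prod_mul_distrib, ← prod_mul_distrib]
    refine prod_congr rfl fun j _ => ?_
    by_cases h : j ∈ B <;> simp [h, mul_comm]
  calc pExpct μ (fun x => pExpct μ fun y => G (B.piecewise x y))
      = ∑ p : (Fin n → Ω) × (Fin n → Ω),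
          ((∏ j, μ (p.1 j)) * ∏ j, μ (p.2 j)) * G (B.piecewise p.1 p.2) := by
        simp only [pExpct, mul_sum, Fintype.sum_prod_type, mul_assoc]
    _ = ∑ p : (Fin n → Ω) × (Fin n → Ω), ((∏ j, μ (p.1 j)) * ∏ j, μ (p.2 j)) * G p.1 :=
        Fintype.sum_equiv σ _ _ fun p => by rw [hweight p.1 p.2]; rfl
    _ = pExpct μ G := by
        simp only [Fintype.sum_prod_type, mul_right_comm _ _ (G _), ← mul_sum,
          sum_prod_eq_one hμsum, mul_one, pExpct]

lemma pExpct_condExp (hμsum : ∑ x, μ x = 1) (A : Finset (Fin n)) (f : (Fin n → Ω) → ℝ) :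
    pExpct μ (condExp μ A f) = pExpct μ f :=
  pExpct_pExpct_piecewise hμsum A f

lemma condExp_condExp (hμsum : ∑ x, μ x = 1) (A B : Finset (Fin n)) (f : (Fin n → Ω) → ℝ) :
    condExp μ A (condExp μ B f) = condExp μ (A ∩ B) f := by
  funext x
  have hpw : ∀ y z : Fin n → Ω,
      B.piecewise (A.piecewise x y) z = (A ∩ B).piecewise x (B.piecewise y z) := fun y z => by
    ext j
    by_cases hA : j ∈ A <;> by_cases hB : j ∈ B <;> simp [hA, hB]
  simp only [condExp, hpw]
  exact pExpct_pExpct_piecewise hμsum B fun t => f ((A ∩ B).piecewise x t)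

lemma condExp_univ (hμsum : ∑ x, μ x = 1) (f : (Fin n → Ω) → ℝ) : condExp μ univ f = f := by
  funext x
  simp [condExp, pExpct, ← sum_mul, sum_prod_eq_one hμsum]

lemma condExp_compl_singleton (hμsum : ∑ x, μ x = 1) (i : Fin n) (h : (Fin n → Ω) → ℝ)
    (x : Fin n → Ω) : condExp μ {i}ᶜ h x = ∑ ω, μ ω * h (Function.update x i ω) := by
  have hpw : ∀ y : Fin n → Ω, ({i}ᶜ : Finset (Fin n)).piecewise x y = Function.update x i (y i) :=
    fun y => by
      ext j
      by_cases h : j = i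
      · subst h; simp
      · simp [h]
  simp only [condExp, hpw]
  exact pExpct_comp_eval hμsum i fun ω => h (Function.update x i ω)

lemma condExp_sum {ι : Type*} (s : Finset ι) (A : Finset (Fin n))
    (F : ι → (Fin n → Ω) → ℝ) (x : Fin n → Ω) :
    condExp μ A (fun y => ∑ k ∈ s, F k y) x = ∑ k ∈ s, condExp μ A (F k) x := by
  simp only [condExp, pExpct, mul_sum]
  exact sum_comm

lemma condExp_const_mul (c : ℝ) (A : Finset (Fin n)) (F : (Fin n → Ω) → ℝ) (x : Fin n → Ω) :
    condExp μ A (fun y => c * F y) x = c * condExp μ A F x := by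
  simp only [condExp, pExpct, mul_sum, mul_left_comm c]

lemma pExpct_mono (hμ : ∀ ω, 0 ≤ μ ω) {F G : (Fin n → Ω) → ℝ} (hFG : ∀ x, F x ≤ G x) :
    pExpct μ F ≤ pExpct μ G :=
  sum_le_sum fun x _ => mul_le_mul_of_nonneg_left (hFG x) (prod_nonneg fun _ _ => hμ _)

lemma pExpct_nonneg (hμ : ∀ ω, 0 ≤ μ ω) {F : (Fin n → Ω) → ℝ} (hF : ∀ x, 0 ≤ F x) :
    0 ≤ pExpct μ F :=
  sum_nonneg fun _ _ => mul_nonneg (prod_nonneg fun _ _ => hμ _) (hF _)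

lemma condExp_nonneg (hμ : ∀ ω, 0 ≤ μ ω) (A : Finset (Fin n)) {f : (Fin n → Ω) → ℝ}
    (hf : ∀ x, 0 ≤ f x) (x : Fin n → Ω) : 0 ≤ condExp μ A f x :=
  sum_nonneg fun _ _ => mul_nonneg (prod_nonneg fun _ _ => hμ _) (hf _)

lemma pExpct_rpow_mul_rpow_le (hμ : ∀ ω, 0 ≤ μ ω) {a b : (Fin n → Ω) → ℝ} (ha : ∀ x, 0 ≤ a x)
    (hb : ∀ x, 0 ≤ b x) {θ : ℝ} (hθ : θ ∈ Set.Icc 0 1) :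
    pExpct μ (fun x => a x ^ (1 - θ) * b x ^ θ) ≤ pExpct μ a ^ (1 - θ) * pExpct μ b ^ θ :=
  sum_mul_rpow_mul_rpow_le univ (fun _ _ => prod_nonneg fun _ _ => hμ _) (fun x _ => ha x)
    (fun x _ => hb x) hθ.1 hθ.2

lemma pqNorm_of_nonneg (q : ℝ) {F : (Fin n → Ω) → ℝ} (hF : ∀ x, 0 ≤ F x) :
    pqNorm μ q F = pExpct μ (fun x => F x ^ q) ^ (1 / q) := by
  simp only [pqNorm, pExpct, abs_of_nonneg (hF _)]

lemma pqNorm_nonneg (hμ : ∀ ω, 0 ≤ μ ω) (q : ℝ) (F : (Fin n → Ω) → ℝ) : 0 ≤ pqNorm μ q F :=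
  rpow_nonneg (sum_nonneg fun _ _ =>
    mul_nonneg (prod_nonneg fun _ _ => hμ _) (rpow_nonneg (abs_nonneg _) q)) _

end ProductSpace

lemma prod_powerset_insert_rpow {ι : Type*} [DecidableEq ι] {U : Finset ι} {i : ι} (hi : i ∉ U)
    {a : Finset ι → ℝ} (ha : ∀ S, 0 ≤ a S) (θ : ℝ) :
    ∏ S ∈ (insert i U).powerset, a S ^ (θ ^ S.card * (1 - θ) ^ ((insert i U).card - S.card)) =
      (∏ S ∈ U.powerset, a S ^ (θ ^ S.card * (1 - θ) ^ (U.card - S.card))) ^ (1 - θ) *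
        (∏ S ∈ U.powerset, a (insert i S) ^ (θ ^ S.card * (1 - θ) ^ (U.card - S.card))) ^ θ := by
  rw [prod_powerset_insert hi, ← finsetProd_rpow _ _ (fun S _ => rpow_nonneg (ha S) _),
    ← finsetProd_rpow _ _ (fun S _ => rpow_nonneg (ha _) _)]
  congr 1 <;> refine prod_congr rfl fun S hS => ?_ <;> rw [← rpow_mul (ha _)] <;> congr 1
  · have := card_le_card (mem_powerset.1 hS)
    rw [card_insert_of_notMem hi, show U.card + 1 - S.card = U.card - S.card + 1 by omega,
      pow_succ]
    ring
  · rw [card_insert_of_notMem hi, card_insert_of_notMem fun h => hi (mem_powerset.1 hS h),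
      Nat.add_sub_add_right, pow_succ]
    ring

lemma insert_union_compl_insert {n : ℕ} {i : Fin n} {U : Finset (Fin n)} (hi : i ∉ U)
    (S : Finset (Fin n)) : insert i S ∪ (insert i U)ᶜ = S ∪ Uᶜ := by
  ext j
  by_cases hj : j = i
  · subst hj; simp [hi]
  · simp [hj]

lemma union_compl_inter_compl_singleton {n : ℕ} {i : Fin n} {S U : Finset (Fin n)} (hi : i ∉ U)
    (hS : S ⊆ U) : (S ∪ Uᶜ) ∩ {i}ᶜ = S ∪ (insert i U)ᶜ := by
  ext j
  by_cases hj : j = i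
  · subst hj
    have : j ∉ S := fun h => hi (hS h)
    simp [hi, this]
  · simp [hj]

section Tensorization

variable {Ω : Type*} [Fintype Ω] {μ : Ω → ℝ} {n : ℕ} {q ρ μs : ℝ}

lemma condExp_noise_rpow_le (hq : 2 ≤ q) (hρ0 : 0 ≤ ρ) (hρ1 : ρ ≤ 1) (hμs0 : 0 < μs)
    (hμs1 : μs < 1) (hμs : ∀ x, μs ≤ μ x) (hμsum : ∑ x, μ x = 1) (i : Fin n)
    {h : (Fin n → Ω) → ℝ} (hh : ∀ x, 0 ≤ h x) (x : Fin n → Ω) :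
    condExp μ {i}ᶜ (fun y => (ρ * h y + (1 - ρ) * condExp μ {i}ᶜ h y) ^ q) x ≤
      (condExp μ {i}ᶜ h x ^ q) ^ (1 - noiseExponent μs q ρ) *
        condExp μ {i}ᶜ (fun y => h y ^ q) x ^ noiseExponent μs q ρ := by
  simp only [condExp_compl_singleton hμsum, Function.update_idem]
  exact sum_noise_rpow_le hq hρ0 hρ1 hμs0 hμs1 hμs hμsum fun ω => hh _

lemma pqNorm_noise_single_le (hq : 2 ≤ q) (hρ0 : 0 ≤ ρ) (hρ1 : ρ ≤ 1) (hμs0 : 0 < μs)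
    (hμs1 : μs < 1) (hμs : ∀ x, μs ≤ μ x) (hμsum : ∑ x, μ x = 1) (i : Fin n)
    {h : (Fin n → Ω) → ℝ} (hh : ∀ x, 0 ≤ h x) :
    pqNorm μ q (fun x => ρ * h x + (1 - ρ) * condExp μ {i}ᶜ h x) ≤
      pqNorm μ q (condExp μ {i}ᶜ h) ^ (1 - noiseExponent μs q ρ) *
        pqNorm μ q h ^ noiseExponent μs q ρ := by
  set lam := noiseExponent μs q ρ
  have hμ : ∀ ω, 0 ≤ μ ω := fun ω => hμs0.le.trans (hμs ω)
  have hEh : ∀ x, 0 ≤ condExp μ {i}ᶜ h x := condExp_nonneg hμ _ hh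
  have hG : ∀ x, 0 ≤ ρ * h x + (1 - ρ) * condExp μ {i}ᶜ h x := fun x =>
    add_nonneg (mul_nonneg hρ0 (hh x)) (mul_nonneg (by linarith) (hEh x))
  have hX := pExpct_nonneg hμ fun x => rpow_nonneg (hEh x) q
  have hY := pExpct_nonneg hμ fun x => rpow_nonneg (hh x) q
  have hmoments : pExpct μ (fun x => (ρ * h x + (1 - ρ) * condExp μ {i}ᶜ h x) ^ q) ≤
      pExpct μ (fun x => condExp μ {i}ᶜ h x ^ q) ^ (1 - lam) *
        pExpct μ (fun x => h x ^ q) ^ lam := calc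
    _ = pExpct μ (condExp μ {i}ᶜ fun y => (ρ * h y + (1 - ρ) * condExp μ {i}ᶜ h y) ^ q) :=
        (pExpct_condExp hμsum _ _).symm
    _ ≤ pExpct μ (fun x => (condExp μ {i}ᶜ h x ^ q) ^ (1 - lam) *
          condExp μ {i}ᶜ (fun y => h y ^ q) x ^ lam) :=
        pExpct_mono hμ (condExp_noise_rpow_le hq hρ0 hρ1 hμs0 hμs1 hμs hμsum i hh)
    _ ≤ pExpct μ (fun x => condExp μ {i}ᶜ h x ^ q) ^ (1 - lam) *
          pExpct μ (condExp μ {i}ᶜ fun y => h y ^ q) ^ lam :=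
        pExpct_rpow_mul_rpow_le hμ (fun x => rpow_nonneg (hEh x) q)
          (condExp_nonneg hμ _ fun x => rpow_nonneg (hh x) q)
          (noiseExponent_mem_Icc (by linarith) hρ0 hρ1 hμs0 hμs1)
    _ = _ := by rw [pExpct_condExp hμsum]
  rw [pqNorm_of_nonneg q hG, pqNorm_of_nonneg q hEh, pqNorm_of_nonneg q hh]
  calc _ ≤ (pExpct μ (fun x => condExp μ {i}ᶜ h x ^ q) ^ (1 - lam) *
          pExpct μ (fun x => h x ^ q) ^ lam) ^ (1 / q) :=
        rpow_le_rpow (pExpct_nonneg hμ fun x => rpow_nonneg (hG x) q) hmoments (by positivity)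
    _ = _ := by
        rw [mul_rpow (rpow_nonneg hX _) (rpow_nonneg hY _), ← rpow_mul hX, ← rpow_mul hX,
          ← rpow_mul hY, ← rpow_mul hY, mul_comm (1 - lam), mul_comm lam]

/-- The noise operator acting only on the coordinates in `U`. -/
noncomputable def noiseOn (μ : Ω → ℝ) (ρ : ℝ) (U : Finset (Fin n)) (f : (Fin n → Ω) → ℝ) :
    (Fin n → Ω) → ℝ :=
  fun x => ∑ S ∈ U.powerset, ρ ^ S.card * (1 - ρ) ^ (U.card - S.card) * condExp μ (S ∪ Uᶜ) f x

lemma noiseOn_univ (f : (Fin n → Ω) → ℝ) : noiseOn μ ρ univ f = noiseOpN μ ρ f := by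
  funext x
  simp [noiseOn, noiseOpN]

lemma noiseOn_empty (hμsum : ∑ x, μ x = 1) (f : (Fin n → Ω) → ℝ) : noiseOn μ ρ ∅ f = f := by
  funext x
  simp [noiseOn, condExp_univ hμsum]

lemma noiseOn_nonneg (hμ : ∀ ω, 0 ≤ μ ω) (hρ0 : 0 ≤ ρ) (hρ1 : ρ ≤ 1) (U : Finset (Fin n))
    {f : (Fin n → Ω) → ℝ} (hf : ∀ x, 0 ≤ f x) (x : Fin n → Ω) : 0 ≤ noiseOn μ ρ U f x :=
  sum_nonneg fun _ _ => mul_nonneg (mul_nonneg (pow_nonneg hρ0 _) (pow_nonneg (by linarith) _))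
    (condExp_nonneg hμ _ hf x)

lemma condExp_noiseOn (hμsum : ∑ x, μ x = 1) (A U : Finset (Fin n)) (f : (Fin n → Ω) → ℝ) :
    condExp μ A (noiseOn μ ρ U f) = noiseOn μ ρ U (condExp μ A f) := by
  funext x
  unfold noiseOn
  simp only [condExp_sum, condExp_const_mul, condExp_condExp hμsum, inter_comm]

lemma noiseOn_insert (hμsum : ∑ x, μ x = 1) {i : Fin n} {U : Finset (Fin n)} (hi : i ∉ U)
    (f : (Fin n → Ω) → ℝ) :
    noiseOn μ ρ (insert i U) f =
      fun x => ρ * noiseOn μ ρ U f x + (1 - ρ) * condExp μ {i}ᶜ (noiseOn μ ρ U f) x := by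
  funext x
  rw [condExp_noiseOn hμsum, noiseOn, sum_powerset_insert hi, add_comm]
  simp only [noiseOn, mul_sum, condExp_condExp hμsum]
  congr 1 <;> refine sum_congr rfl fun S hS => ?_
  · rw [card_insert_of_notMem hi, card_insert_of_notMem fun h => hi (mem_powerset.1 hS h),
      Nat.add_sub_add_right, insert_union_compl_insert hi, pow_succ]
    ring
  · have := card_le_card (mem_powerset.1 hS)
    rw [card_insert_of_notMem hi, show U.card + 1 - S.card = U.card - S.card + 1 by omega,
      union_compl_inter_compl_singleton hi (mem_powerset.1 hS), pow_succ]
    ring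

lemma pqNorm_noiseOn_le (hq : 2 ≤ q) (hρ0 : 0 ≤ ρ) (hρ1 : ρ ≤ 1) (hμs0 : 0 < μs)
    (hμs1 : μs < 1) (hμs : ∀ x, μs ≤ μ x) (hμsum : ∑ x, μ x = 1) (U : Finset (Fin n))
    {f : (Fin n → Ω) → ℝ} (hf : ∀ x, 0 ≤ f x) :
    pqNorm μ q (noiseOn μ ρ U f) ≤
      ∏ S ∈ U.powerset, pqNorm μ q (condExp μ (S ∪ Uᶜ) f) ^
        (noiseExponent μs q ρ ^ S.card * (1 - noiseExponent μs q ρ) ^ (U.card - S.card)) := by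
  have hμ : ∀ ω, 0 ≤ μ ω := fun ω => hμs0.le.trans (hμs ω)
  induction U using Finset.induction_on generalizing f with
  | empty => simp [noiseOn_empty hμsum, condExp_univ hμsum]
  | @insert i U hi IH =>
    set lam := noiseExponent μs q ρ
    have hlam := noiseExponent_mem_Icc (by linarith : (1 : ℝ) < q) hρ0 hρ1 hμs0 hμs1
    set a : Finset (Fin n) → ℝ := fun S => pqNorm μ q (condExp μ (S ∪ (insert i U)ᶜ) f)
    have ha : ∀ S, 0 ≤ a S := fun S => pqNorm_nonneg hμ q _
    have hresampled : pqNorm μ q (noiseOn μ ρ U (condExp μ {i}ᶜ f)) ≤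
        ∏ S ∈ U.powerset, a S ^ (lam ^ S.card * (1 - lam) ^ (U.card - S.card)) :=
      (IH (condExp_nonneg hμ _ hf)).trans_eq <| prod_congr rfl fun S hS => by
        rw [condExp_condExp hμsum, union_compl_inter_compl_singleton hi (mem_powerset.1 hS)]
    have hkept : pqNorm μ q (noiseOn μ ρ U f) ≤
        ∏ S ∈ U.powerset, a (insert i S) ^ (lam ^ S.card * (1 - lam) ^ (U.card - S.card)) :=
      (IH hf).trans_eq <| prod_congr rfl fun S _ => by simp only [a, insert_union_compl_insert hi]
    calc pqNorm μ q (noiseOn μ ρ (insert i U) f)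
        ≤ pqNorm μ q (condExp μ {i}ᶜ (noiseOn μ ρ U f)) ^ (1 - lam) *
            pqNorm μ q (noiseOn μ ρ U f) ^ lam := by
          rw [noiseOn_insert hμsum hi]
          exact pqNorm_noise_single_le hq hρ0 hρ1 hμs0 hμs1 hμs hμsum i
            (noiseOn_nonneg hμ hρ0 hρ1 U hf)
      _ ≤ (∏ S ∈ U.powerset, a S ^ (lam ^ S.card * (1 - lam) ^ (U.card - S.card))) ^ (1 - lam) *
            (∏ S ∈ U.powerset, a (insert i S) ^ (lam ^ S.card * (1 - lam) ^ (U.card - S.card)))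
              ^ lam := by
          rw [condExp_noiseOn hμsum]
          exact mul_le_mul (rpow_le_rpow (pqNorm_nonneg hμ q _) hresampled (by linarith [hlam.2]))
            (rpow_le_rpow (pqNorm_nonneg hμ q _) hkept hlam.1)
            (rpow_nonneg (pqNorm_nonneg hμ q _) _)
            (rpow_nonneg (prod_nonneg fun S _ => rpow_nonneg (ha S) _) _)
      _ = _ := (prod_powerset_insert_rpow hi ha lam).symm

end Tensorization

lemma lt_one_of_two_le_card {α : Type*} [Fintype α] {w : α → ℝ} (hα : 2 ≤ Fintype.card α)
    (hw : ∀ x, 0 < w x) (hwsum : ∑ x, w x = 1) (x : α) : w x < 1 := by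
  classical
  obtain ⟨y, hyx⟩ := Fintype.exists_ne_of_one_lt_card (by omega) x
  have : w x + w y ≤ ∑ z, w z := by
    rw [← sum_pair hyx.symm]
    exact sum_le_sum_of_subset_of_nonneg (subset_univ _) fun z _ _ => (hw z).le
  linarith [hw y]

end NoiseStability

open NoiseStability

theorem stmt4 {Ω : Type*} [Fintype Ω] (hΩ : 2 ≤ Fintype.card Ω)
    (μ : Ω → ℝ) (hμpos : ∀ x, 0 < μ x) (hμsum : ∑ x, μ x = 1)
    (μs : ℝ) (hμs_le : ∀ x, μs ≤ μ x) (hμs_mem : ∃ x, μ x = μs)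
    (q ρ lam : ℝ) (hq : 2 ≤ q) (hρ0 : 0 ≤ ρ) (hρ1 : ρ ≤ 1)
    (hlam : lam = Real.log (μs * (1 + ρ * (1 / μs - 1)) ^ q + (1 - μs) * (1 - ρ) ^ q) /
      ((q - 1) * Real.log (1 / μs)))
    (n : ℕ) (f : (Fin n → Ω) → ℝ) (hf : ∀ x, 0 ≤ f x) :
    pqNorm μ q (noiseOpN μ ρ f) ≤
      ∏ S : Finset (Fin n),
        pqNorm μ q (condExp μ S f) ^ (lam ^ S.card * (1 - lam) ^ (n - S.card)) := by
  obtain ⟨x₀, rfl⟩ := hμs_mem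
  have h := pqNorm_noiseOn_le hq hρ0 hρ1 (hμpos x₀) (lt_one_of_two_le_card hΩ hμpos hμsum x₀)
    hμs_le hμsum univ hf
  subst hlam
  rw [noiseOn_univ, powerset_univ] at h
  simp only [compl_univ, union_empty, card_univ, Fintype.card_fin] at h
  exact h
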